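/- For all real numbers a, α, β, γ, C, every real x > 0 with x ≠ 1, and every twice continuously differentiable function f : (0,∞) → ℝ, the following identity holds: x^{−(a−1/2)/2} · (ϖ_a(K)(t ↦ t^{(a−1/2)/2} f(t)))(x) = x(x−1)·f″(x) + [−β·x(x−1) + (a/2 + α)(x−1) + (a/2 + 2γ − α)x]·f′(x) + [−aβx + λ_a(α,β,γ) + C]·f(x). -/

import Mathlib

open Real

/-- The first order operator `B : g ↦ −g′ + (½(a−½)x⁻¹ + β)·g`. -/
noncomputable def Bop (a β : ℝ) (g : ℝ → ℝ) : ℝ → ℝ := fun x =>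
  -deriv g x + ((1 / 2) * (a - 1 / 2) * x⁻¹ + β) * g x

/-- The first order operator `A : h ↦ x·h′ + ¼·h − x²·h′ − ½(a+½)x·h + α·h`. -/
noncomputable def Aop (a α : ℝ) (h : ℝ → ℝ) : ℝ → ℝ := fun x =>
  x * deriv h x + (1 / 4) * h x - x ^ 2 * deriv h x - (1 / 2) * (a + 1 / 2) * x * h x + α * h x

/-- The second order operator `ϖ_a(K(α,β,γ;C)) : g ↦ A(Bg) + 2γ·x·g′ + C·g`. -/
noncomputable def piK (a α β γ C : ℝ) (g : ℝ → ℝ) : ℝ → ℝ := fun x =>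
  Aop a α (Bop a β g) x + 2 * γ * x * deriv g x + C * g x

/-- The constant `λ_a(α,β,γ) = β(a/2 + α) + γ(a − ½)`. -/
noncomputable def lamConst (a α β γ : ℝ) : ℝ := β * (a / 2 + α) + γ * (a - 1 / 2)

/-- Conjugating `ϖ_a(K(α,β,γ;C))` by the power function `x^{(a−1/2)/2}` yields the
(confluent Heun type) second order differential operator
`x(x−1)·d²/dx² + [−βx(x−1) + (a/2+α)(x−1) + (a/2+2γ−α)x]·d/dx + [−aβx + λ_a(α,β,γ) + C]`. -/
theorem piK_conjugation (a α β γ C : ℝ) (x : ℝ) (hx : 0 < x) (hx1 : x ≠ 1)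
    (f : ℝ → ℝ) (hf : ContDiffOn ℝ 2 f (Set.Ioi (0 : ℝ))) :
    x ^ (-(a - 1 / 2) / 2) *
        piK a α β γ C (fun t : ℝ => t ^ ((a - 1 / 2) / 2) * f t) x =
      x * (x - 1) * deriv (deriv f) x +
        (-β * (x * (x - 1)) + (a / 2 + α) * (x - 1) + (a / 2 + 2 * γ - α) * x) * deriv f x +
        (-(a * β * x) + lamConst a α β γ + C) * f x := by
  have hx0 : x ≠ 0 := hx.ne'
  set g : ℝ → ℝ := fun t : ℝ => t ^ ((a - 1 / 2) / 2) * f t with hg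
  set u : ℝ → ℝ := fun t => β * f t - deriv f t with hu
  have hfd : ∀ t ∈ Set.Ioi (0:ℝ), HasDerivAt f (deriv f t) t := by
    intro t ht
    exact ((hf.contDiffAt (isOpen_Ioi.mem_nhds ht)).differentiableAt
      (by norm_num)).hasDerivAt
  have hfd2 : HasDerivAt (deriv f) (deriv (deriv f) x) x := by
    have h1 : ContDiffOn ℝ 1 (deriv f) (Set.Ioi (0:ℝ)) := by
      have := hf.deriv_of_isOpen (m := 1) isOpen_Ioi (by norm_num)
      exact this.of_le (by norm_num)
    exact (((h1.contDiffAt (isOpen_Ioi.mem_nhds hx)).differentiableAt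
      (by norm_num))).hasDerivAt
  have hgd : ∀ t ∈ Set.Ioi (0:ℝ), HasDerivAt g
      (((a - 1 / 2) / 2) * t ^ ((a - 1 / 2) / 2 - 1) * f t
        + t ^ ((a - 1 / 2) / 2) * deriv f t) t := by
    intro t ht
    exact (Real.hasDerivAt_rpow_const (Or.inl (ne_of_gt ht))).mul (hfd t ht)
  have hgx : deriv g x = ((a - 1 / 2) / 2) * x ^ ((a - 1 / 2) / 2 - 1) * f x
      + x ^ ((a - 1 / 2) / 2) * deriv f x := (hgd x hx).deriv
  have hBeq : ∀ t ∈ Set.Ioi (0:ℝ), Bop a β g t = t ^ ((a - 1 / 2) / 2) * u t := by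
    intro t ht
    have ht0 : (t:ℝ) ≠ 0 := ne_of_gt ht
    have hts : t ^ ((a - 1 / 2) / 2 - 1) = t ^ ((a - 1 / 2) / 2) * t⁻¹ := by
      rw [Real.rpow_sub ht, Real.rpow_one]; ring
    simp only [Bop, (hgd t ht).deriv, hu, hts]
    simp only [hg]
    field_simp
    ring
  have hBev : Bop a β g =ᶠ[nhds x] fun t => t ^ ((a - 1 / 2) / 2) * u t :=
    Filter.eventuallyEq_of_mem (isOpen_Ioi.mem_nhds hx) hBeq
  have hud : HasDerivAt u (β * deriv f x - deriv (deriv f) x) x :=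
    ((hfd x hx).const_mul β).sub hfd2
  have hdB : deriv (Bop a β g) x =
      ((a - 1 / 2) / 2) * x ^ ((a - 1 / 2) / 2 - 1) * u x
        + x ^ ((a - 1 / 2) / 2) * (β * deriv f x - deriv (deriv f) x) := by
    rw [hBev.deriv_eq]
    exact ((Real.hasDerivAt_rpow_const (Or.inl hx0)).mul hud).deriv
  have hBx : Bop a β g x = x ^ ((a - 1 / 2) / 2) * u x := hBeq x hx
  have hxp1 : x ^ ((a - 1 / 2) / 2 - 1) = x ^ ((a - 1 / 2) / 2) * x⁻¹ := by
    rw [Real.rpow_sub hx, Real.rpow_one]; ring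
  have hneg : x ^ (-(a - 1 / 2) / 2) = (x ^ ((a - 1 / 2) / 2))⁻¹ := by
    rw [neg_div, Real.rpow_neg hx.le]
  have hX0 : x ^ ((a - 1 / 2) / 2) ≠ 0 := (Real.rpow_pos_of_pos hx _).ne'
  simp only [piK, Aop, hdB, hBx, hgx, hxp1, hneg, hu, lamConst]
  simp only [hg]
  field_simp
  ring
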